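/- arXiv:1304.7353 — 4 statements merged into one kernel-verified Lean document; each statement's English description precedes it below -/
import Mathlib

section
/- Let μ be a probability measure on a measurable space X, and let λ₁, λ₂ : X → ℝ be measurable functions with λ₁(x) ≥ κ and λ₂(x) ≥ κ for all x, where κ > 0. Then ∫ λ₁(x) log(λ₁(x)/λ₂(x)) dμ(x) − ∫ (λ₁(x) − λ₂(x)) dμ(x) ≤ (1/κ) ∫ (λ₁(x) − λ₂(x))² dμ(x). -/
open MeasureTheory Real

lemma mul_log_div_sub_sub_le_sq_div {a b : ℝ} (ha : 0 < a) (hb : 0 < b) :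
    a * log (a / b) - (a - b) ≤ (a - b) ^ 2 / b :=
  calc a * log (a / b) - (a - b)
      ≤ a * (a / b - 1) - (a - b) := by
        gcongr
        exact log_le_sub_one_of_pos (div_pos ha hb)
    _ = (a - b) ^ 2 / b := by field_simp

lemma mul_log_div_sub_sub_le_sq_div_of_le {a b κ : ℝ} (hκ : 0 < κ) (ha : 0 < a) (hb : κ ≤ b) :
    a * log (a / b) - (a - b) ≤ 1 / κ * (a - b) ^ 2 :=
  calc a * log (a / b) - (a - b)
      ≤ (a - b) ^ 2 / b := mul_log_div_sub_sub_le_sq_div ha (hκ.trans_le hb)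
    _ ≤ (a - b) ^ 2 / κ := div_le_div_of_nonneg_left (sq_nonneg _) hκ hb
    _ = 1 / κ * (a - b) ^ 2 := by ring

theorem kl_le_chi_squared_general {X : Type*} [MeasurableSpace X] (μ : Measure X)
    (κ : ℝ) (hκ : 0 < κ) (l1 l2 : X → ℝ)
    (hl1 : ∀ x, κ ≤ l1 x) (hl2 : ∀ x, κ ≤ l2 x)
    (hint1 : Integrable (fun x => l1 x * Real.log (l1 x / l2 x)) μ)
    (hint2 : Integrable (fun x => l1 x - l2 x) μ)
    (hint3 : Integrable (fun x => (l1 x - l2 x) ^ 2) μ) :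
    ∫ x, l1 x * Real.log (l1 x / l2 x) ∂μ - ∫ x, (l1 x - l2 x) ∂μ ≤
      (1 / κ) * ∫ x, (l1 x - l2 x) ^ 2 ∂μ := by
  rw [← integral_sub hint1 hint2, ← integral_const_mul]
  exact integral_mono (hint1.sub hint2) (hint3.const_mul _) fun x =>
    mul_log_div_sub_sub_le_sq_div_of_le hκ (hκ.trans_le (hl1 x)) (hl2 x)

theorem kl_le_chi_squared {X : Type*} [MeasurableSpace X] (μ : Measure X)
    [IsProbabilityMeasure μ] (κ : ℝ) (hκ : 0 < κ) (l1 l2 : X → ℝ)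
    (hm1 : Measurable l1) (hm2 : Measurable l2)
    (hl1 : ∀ x, κ ≤ l1 x) (hl2 : ∀ x, κ ≤ l2 x)
    (C : ℝ) (hC1 : ∀ x, l1 x ≤ C) (hC2 : ∀ x, l2 x ≤ C)
    (hint1 : Integrable (fun x => l1 x * Real.log (l1 x / l2 x)) μ)
    (hint2 : Integrable (fun x => l1 x - l2 x) μ)
    (hint3 : Integrable (fun x => (l1 x - l2 x) ^ 2) μ) :
    ∫ x, l1 x * Real.log (l1 x / l2 x) ∂μ - ∫ x, (l1 x - l2 x) ∂μ ≤
      (1 / κ) * ∫ x, (l1 x - l2 x) ^ 2 ∂μ :=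
  kl_le_chi_squared_general μ κ hκ l1 l2 hl1 hl2 hint1 hint2 hint3
end

section
/- Let μ be a probability measure on X and λ₁, λ₂ : X → ℝ bounded measurable with λᵢ ≥ κ > 0, λ₁ = g∘w, λ₂ = g∘v for a Lipschitz g : ℝ → [κ, ∞) with Lipschitz constant ḡ. Then ∫ λ₁(x) (log(λ₁(x)/λ₂(x)))² dμ(x) ≤ (ḡ²/κ) ‖w−v‖_∞² · (1 + (ḡ/κ) ‖w−v‖_∞). -/
/-! Writing `d = |a - b|` and `m = min a b`, the bound `|log (a / b)| ≤ d / m` and `a ≤ m + d` give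
`a log² (a / b) ≤ d² / m + d³ / m²` for `a, b ≥ κ`. With `a = g (w x)`, `b = g (v x)` the Lipschitz
bound gives `d ≤ ḡ ‖w - v‖_∞`, and the pointwise bound integrates against the probability measure `μ`. -/

open MeasureTheory Real

lemma Real.abs_log_div_le_abs_sub_div_min {a b : ℝ} (ha : 0 < a) (hb : 0 < b) :
    |log (a / b)| ≤ |a - b| / min a b := by
  wlog hab : a ≤ b generalizing a b
  · have := this hb ha (le_of_not_ge hab)
    rwa [← inv_div, Real.log_inv, abs_neg, abs_sub_comm, min_comm] at this
  have hlog : log (a / b) ≤ 0 := log_nonpos (by positivity) (div_le_one_of_le₀ hab hb.le)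
  rw [abs_of_nonpos hlog, ← Real.log_inv, inv_div, min_eq_left hab, abs_sub_comm,
    abs_of_nonneg (sub_nonneg.2 hab)]
  calc log (b / a) ≤ b / a - 1 := log_le_sub_one_of_pos (by positivity)
    _ = (b - a) / a := by field_simp

lemma mul_log_div_sq_le {κ a b : ℝ} (hκ : 0 < κ) (ha : κ ≤ a) (hb : κ ≤ b) :
    a * log (a / b) ^ 2 ≤ |a - b| ^ 2 / κ + |a - b| ^ 3 / κ ^ 2 := by
  have ha_le : a ≤ min a b + |a - b| := by
    rcases le_total a b with h | h
    · rw [min_eq_left h]; linarith [abs_nonneg (a - b)]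
    · rw [min_eq_right h, abs_of_nonneg (sub_nonneg.2 h)]; linarith
  set m := min a b
  set d := |a - b|
  have hm : κ ≤ m := le_min ha hb
  have hm0 : 0 < m := hκ.trans_le hm
  have hlog : log (a / b) ^ 2 ≤ (d / m) ^ 2 := by
    rw [← sq_abs]
    exact pow_le_pow_left₀ (abs_nonneg _)
      (abs_log_div_le_abs_sub_div_min (hκ.trans_le ha) (hκ.trans_le hb)) 2
  calc a * log (a / b) ^ 2 ≤ (m + d) * (d / m) ^ 2 :=
        mul_le_mul ha_le hlog (sq_nonneg _) (by positivity)
    _ = d ^ 2 / m + d ^ 3 / m ^ 2 := by field_simp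
    _ ≤ d ^ 2 / κ + d ^ 3 / κ ^ 2 := by gcongr

theorem v_le_sup_norm_general {X : Type*} [MeasurableSpace X] (μ : Measure X)
    [IsProbabilityMeasure μ] (κ gbar : ℝ) (hκ : 0 < κ)
    (g : ℝ → ℝ) (hg : ∀ a b : ℝ, |g a - g b| ≤ gbar * |a - b|)
    (hgκ : ∀ t : ℝ, κ ≤ g t)
    (w v : X → ℝ)
    (Cw : ℝ) (hw : ∀ x, |w x| ≤ Cw) (Cv : ℝ) (hv : ∀ x, |v x| ≤ Cv) :
    ∫ x, g (w x) * (Real.log (g (w x) / g (v x))) ^ 2 ∂μ ≤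
      (gbar ^ 2 / κ) * (⨆ x, |w x - v x|) ^ 2 *
        (1 + (gbar / κ) * ⨆ x, |w x - v x|) := by
  have hgbar : 0 ≤ gbar := by simpa using (abs_nonneg _).trans (hg 1 0)
  have hbdd : BddAbove (Set.range fun x => |w x - v x|) :=
    ⟨Cw + Cv, by rintro _ ⟨x, rfl⟩; exact (abs_sub _ _).trans (add_le_add (hw x) (hv x))⟩
  set M := ⨆ x, |w x - v x|
  have hM : 0 ≤ M := Real.iSup_nonneg fun _ => abs_nonneg _
  have hpt : ∀ x, ‖g (w x) * log (g (w x) / g (v x)) ^ 2‖ ≤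
      (gbar * M) ^ 2 / κ + (gbar * M) ^ 3 / κ ^ 2 := by
    intro x
    have hd : |g (w x) - g (v x)| ≤ gbar * M :=
      (hg _ _).trans (mul_le_mul_of_nonneg_left (le_ciSup hbdd x) hgbar)
    rw [Real.norm_of_nonneg (mul_nonneg (hκ.trans_le (hgκ _)).le (sq_nonneg _))]
    refine (mul_log_div_sq_le hκ (hgκ _) (hgκ _)).trans ?_
    gcongr
  calc ∫ x, g (w x) * log (g (w x) / g (v x)) ^ 2 ∂μ
      ≤ ‖∫ x, g (w x) * log (g (w x) / g (v x)) ^ 2 ∂μ‖ := le_norm_self _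
    -- valid without integrability: a non-integrable integrand has integral `0`
    _ ≤ ((gbar * M) ^ 2 / κ + (gbar * M) ^ 3 / κ ^ 2) * μ.real Set.univ :=
      norm_integral_le_of_norm_le_const (ae_of_all _ hpt)
    _ = (gbar ^ 2 / κ) * M ^ 2 * (1 + (gbar / κ) * M) := by
      rw [probReal_univ, mul_one]; field_simp

theorem v_le_sup_norm {X : Type*} [MeasurableSpace X] (μ : Measure X)
    [IsProbabilityMeasure μ] (κ gbar : ℝ) (hκ : 0 < κ)
    (g : ℝ → ℝ) (hg : ∀ a b : ℝ, |g a - g b| ≤ gbar * |a - b|)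
    (hgκ : ∀ t : ℝ, κ ≤ g t)
    (w v : X → ℝ)
    (hmw : Measurable fun x => g (w x)) (hmv : Measurable fun x => g (v x))
    (Cw : ℝ) (hw : ∀ x, |w x| ≤ Cw) (Cv : ℝ) (hv : ∀ x, |v x| ≤ Cv)
    (hint : Integrable (fun x => g (w x) * (Real.log (g (w x) / g (v x))) ^ 2) μ) :
    ∫ x, g (w x) * (Real.log (g (w x) / g (v x))) ^ 2 ∂μ ≤
      (gbar ^ 2 / κ) * (⨆ x, |w x - v x|) ^ 2 *
        (1 + (gbar / κ) * ⨆ x, |w x - v x|) :=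
  v_le_sup_norm_general μ κ gbar hκ g hg hgκ w v Cw hw Cv hv
end

section
/- Let g : ℝ → [κ, ∞) be Lipschitz with constant ḡ, κ > 0, and set c_g = ḡ²/κ + ḡ³/κ². For bounded functions w, v with ‖w − v‖_∞ ≤ 1, both the KL divergence and the KL variance between the Poisson point process laws with intensities g∘w and g∘v are bounded by c_g ‖w − v‖_∞². -/
open MeasureTheory Real

lemma kl_aux1 (κ a b : ℝ) (hκ : 0 < κ) (ha : κ ≤ a) (hb : κ ≤ b) :
    a * Real.log (a / b) - (a - b) ≤ (a - b) ^ 2 / κ := by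
  have ha0 : 0 < a := hκ.trans_le ha
  have hb0 : 0 < b := hκ.trans_le hb
  have h1 : Real.log (a / b) ≤ a / b - 1 := Real.log_le_sub_one_of_pos (div_pos ha0 hb0)
  have h2 : a * Real.log (a / b) ≤ a * (a / b - 1) := by nlinarith
  have h3 : a * (a / b - 1) - (a - b) = (a - b) ^ 2 / b := by field_simp
  have h4 : (a - b) ^ 2 / b ≤ (a - b) ^ 2 / κ :=
    div_le_div_of_nonneg_left (sq_nonneg _) hκ hb
  linarith

lemma kl_aux_log (κ a b : ℝ) (hκ : 0 < κ) (ha : κ ≤ a) (hb : κ ≤ b) :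
    |Real.log (a / b)| ≤ |a - b| / min a b := by
  have ha0 : 0 < a := hκ.trans_le ha
  have hb0 : 0 < b := hκ.trans_le hb
  rcases le_total b a with h | h
  · have h1 : Real.log (a / b) ≤ (a - b) / b := by
      calc Real.log (a / b) ≤ a / b - 1 := Real.log_le_sub_one_of_pos (div_pos ha0 hb0)
        _ = (a - b) / b := by field_simp
    have h2 : 0 ≤ Real.log (a / b) := Real.log_nonneg (by rw [le_div_iff₀ hb0]; linarith)
    rw [abs_of_nonneg h2, min_eq_right h, abs_of_nonneg (by linarith : (0:ℝ) ≤ a - b)]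
    exact h1
  · have h1 : Real.log (b / a) ≤ (b - a) / a := by
      calc Real.log (b / a) ≤ b / a - 1 := Real.log_le_sub_one_of_pos (div_pos hb0 ha0)
        _ = (b - a) / a := by field_simp
    have h2 : Real.log (a / b) ≤ 0 := Real.log_nonpos (by positivity) (by
      rw [div_le_one hb0]; linarith)
    have h3 : Real.log (a / b) = - Real.log (b / a) := by
      rw [Real.log_div ha0.ne' hb0.ne', Real.log_div hb0.ne' ha0.ne']; ring
    rw [abs_of_nonpos h2, min_eq_left h, abs_of_nonpos (by linarith : a - b ≤ 0), h3, neg_neg]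
    have := (le_div_iff₀ ha0).mp h1
    rw [le_div_iff₀ ha0]
    linarith

lemma kl_alg (m d : ℝ) (hm : m ≠ 0) :
    (m + d) * (d / m) ^ 2 = d ^ 2 / m + d ^ 3 / m ^ 2 := by
  field_simp

lemma kl_aux2 (κ a b : ℝ) (hκ : 0 < κ) (ha : κ ≤ a) (hb : κ ≤ b) :
    a * (Real.log (a / b)) ^ 2 ≤ (a - b) ^ 2 / κ + |a - b| ^ 3 / κ ^ 2 := by
  have ha0 : 0 < a := hκ.trans_le ha
  have hm : κ ≤ min a b := le_min ha hb
  have hm0 : 0 < min a b := hκ.trans_le hm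
  have hlog := kl_aux_log κ a b hκ ha hb
  have ham : a ≤ min a b + |a - b| := by
    rcases le_total b a with h | h
    · rw [min_eq_right h, abs_of_nonneg (by linarith : (0:ℝ) ≤ a - b)]; linarith
    · rw [min_eq_left h]; simp [abs_nonneg]
  have h1 : (Real.log (a / b)) ^ 2 ≤ (|a - b| / min a b) ^ 2 := by
    rw [← sq_abs (Real.log (a / b))]
    exact pow_le_pow_left₀ (abs_nonneg _) hlog 2
  have h2 : a * (Real.log (a / b)) ^ 2 ≤ (min a b + |a - b|) * (|a - b| / min a b) ^ 2 := by
    have := mul_le_mul ham h1 (sq_nonneg _) (by positivity)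
    linarith [this]
  rw [kl_alg _ _ hm0.ne'] at h2
  have h4 : |a - b| ^ 2 / min a b ≤ (a - b) ^ 2 / κ := by
    rw [sq_abs]; exact div_le_div_of_nonneg_left (sq_nonneg _) hκ hm
  have h5 : |a - b| ^ 3 / (min a b) ^ 2 ≤ |a - b| ^ 3 / κ ^ 2 := by
    apply div_le_div_of_nonneg_left (by positivity) (by positivity)
    exact pow_le_pow_left₀ hκ.le hm 2
  linarith

theorem kl_and_v_le {X : Type*} [MeasurableSpace X] (μ : Measure X)
    [IsProbabilityMeasure μ] (κ gbar : ℝ) (hκ : 0 < κ)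
    (g : ℝ → ℝ) (hg : ∀ a b : ℝ, |g a - g b| ≤ gbar * |a - b|)
    (hgκ : ∀ t : ℝ, κ ≤ g t)
    (w v : X → ℝ)
    (hmw : Measurable fun x => g (w x)) (hmv : Measurable fun x => g (v x))
    (Cw : ℝ) (hw : ∀ x, |w x| ≤ Cw) (Cv : ℝ) (hv : ∀ x, |v x| ≤ Cv)
    (hsup : (⨆ x, |w x - v x|) ≤ 1)
    (hint1 : Integrable (fun x => g (w x) * Real.log (g (w x) / g (v x))) μ)
    (hint2 : Integrable (fun x => g (w x) - g (v x)) μ)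
    (hint3 : Integrable (fun x => g (w x) * (Real.log (g (w x) / g (v x))) ^ 2) μ) :
    (∫ x, g (w x) * Real.log (g (w x) / g (v x)) ∂μ -
        ∫ x, (g (w x) - g (v x)) ∂μ ≤
      (gbar ^ 2 / κ + gbar ^ 3 / κ ^ 2) * (⨆ x, |w x - v x|) ^ 2) ∧
    (∫ x, g (w x) * (Real.log (g (w x) / g (v x))) ^ 2 ∂μ ≤
      (gbar ^ 2 / κ + gbar ^ 3 / κ ^ 2) * (⨆ x, |w x - v x|) ^ 2) := by
  have hne : Nonempty X := by
    by_contra h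
    rw [not_nonempty_iff] at h
    have h1 : μ Set.univ = 1 := measure_univ
    rw [Set.univ_eq_empty_iff.mpr h, measure_empty] at h1
    exact zero_ne_one h1
  have hgbar : 0 ≤ gbar := by
    have := hg 0 1
    simp only [zero_sub, abs_neg, abs_one, mul_one] at this
    exact le_trans (abs_nonneg _) this
  set S := ⨆ x, |w x - v x| with hSdef
  have hbdd : BddAbove (Set.range fun x => |w x - v x|) := by
    refine ⟨Cw + Cv, ?_⟩
    rintro y ⟨x, rfl⟩
    calc |w x - v x| ≤ |w x| + |v x| := abs_sub _ _
      _ ≤ Cw + Cv := add_le_add (hw x) (hv x)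
  have hSle : ∀ x, |w x - v x| ≤ S := fun x => le_ciSup hbdd x
  have hS0 : 0 ≤ S := le_trans (abs_nonneg _) (hSle (Classical.arbitrary X))
  have hd : ∀ x, |g (w x) - g (v x)| ≤ gbar * S := fun x =>
    (hg _ _).trans (mul_le_mul_of_nonneg_left (hSle x) hgbar)
  set C := (gbar ^ 2 / κ + gbar ^ 3 / κ ^ 2) * S ^ 2 with hCdef
  have hd2 : ∀ x, (g (w x) - g (v x)) ^ 2 ≤ (gbar * S) ^ 2 := fun x => by
    rw [← sq_abs (g (w x) - g (v x))]
    exact pow_le_pow_left₀ (abs_nonneg _) (hd x) 2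
  have hd3 : ∀ x, |g (w x) - g (v x)| ^ 3 ≤ (gbar * S) ^ 3 := fun x =>
    pow_le_pow_left₀ (abs_nonneg _) (hd x) 3
  have hS3 : gbar ^ 3 * S ^ 3 ≤ gbar ^ 3 * S ^ 2 := by
    apply mul_le_mul_of_nonneg_left _ (by positivity)
    calc S ^ 3 = S ^ 2 * S := by ring
      _ ≤ S ^ 2 * 1 := mul_le_mul_of_nonneg_left hsup (sq_nonneg _)
      _ = S ^ 2 := mul_one _
  have key1 : ∀ x, g (w x) * Real.log (g (w x) / g (v x)) - (g (w x) - g (v x)) ≤ C := by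
    intro x
    have h1 := kl_aux1 κ (g (w x)) (g (v x)) hκ (hgκ _) (hgκ _)
    have h2 : (g (w x) - g (v x)) ^ 2 / κ ≤ gbar ^ 2 / κ * S ^ 2 := by
      rw [div_le_iff₀ hκ]
      calc (g (w x) - g (v x)) ^ 2 ≤ (gbar * S) ^ 2 := hd2 x
        _ = gbar ^ 2 / κ * S ^ 2 * κ := by field_simp
    have h3 : 0 ≤ gbar ^ 3 / κ ^ 2 * S ^ 2 := by positivity
    rw [hCdef]
    linarith
  have key2 : ∀ x, g (w x) * (Real.log (g (w x) / g (v x))) ^ 2 ≤ C := by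
    intro x
    have h1 := kl_aux2 κ (g (w x)) (g (v x)) hκ (hgκ _) (hgκ _)
    have h2 : (g (w x) - g (v x)) ^ 2 / κ ≤ gbar ^ 2 / κ * S ^ 2 := by
      rw [div_le_iff₀ hκ]
      calc (g (w x) - g (v x)) ^ 2 ≤ (gbar * S) ^ 2 := hd2 x
        _ = gbar ^ 2 / κ * S ^ 2 * κ := by field_simp
    have h3 : |g (w x) - g (v x)| ^ 3 / κ ^ 2 ≤ gbar ^ 3 / κ ^ 2 * S ^ 2 := by
      rw [div_le_iff₀ (by positivity : (0:ℝ) < κ ^ 2)]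
      calc |g (w x) - g (v x)| ^ 3 ≤ (gbar * S) ^ 3 := hd3 x
        _ = gbar ^ 3 * S ^ 3 := by ring
        _ ≤ gbar ^ 3 * S ^ 2 := hS3
        _ = gbar ^ 3 / κ ^ 2 * S ^ 2 * κ ^ 2 := by field_simp
    rw [hCdef]
    linarith
  constructor
  · rw [← integral_sub hint1 hint2]
    calc (∫ x, (g (w x) * Real.log (g (w x) / g (v x)) - (g (w x) - g (v x))) ∂μ)
        ≤ ∫ _, C ∂μ := integral_mono (hint1.sub hint2) (integrable_const C) key1
      _ = C := by simp
  · calc (∫ x, g (w x) * (Real.log (g (w x) / g (v x))) ^ 2 ∂μ)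
        ≤ ∫ _, C ∂μ := integral_mono hint3 (integrable_const C) key2
      _ = C := by simp
end

section
/- Let μ be a probability measure and λ₁, λ₂ bounded measurable intensities with λᵢ ≥ κ > 0. Then ∫ λ₁(x)(log(λ₁(x)/λ₂(x)))² dμ(x) ≤ (1/κ)‖λ₁−λ₂‖_∞² + (1/κ²)‖λ₁−λ₂‖_∞³. -/
/-! Both pointwise bounds come from `log t ≤ t - 1`, applied to whichever of `a / b`, `b / a` is
at least `1`; for `b ≤ a` the leftover factor `a / b = 1 + (a - b) / b` produces the cubic term.
Since `a, b ≥ κ`, the integrand is bounded by a constant, which then bounds its integral against a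
probability measure. -/

open MeasureTheory Real

lemma sq_log_le_sq_sub_one {t : ℝ} (ht : 1 ≤ t) : log t ^ 2 ≤ (t - 1) ^ 2 :=
  pow_le_pow_left₀ (log_nonneg ht) (log_le_sub_one_of_pos (by linarith)) 2

lemma mul_sq_log_div_le_of_le {a b : ℝ} (ha : 0 < a) (hab : a ≤ b) :
    a * log (a / b) ^ 2 ≤ (a - b) ^ 2 / a := by
  have hswap : log (a / b) ^ 2 = log (b / a) ^ 2 := by rw [← inv_div, log_inv, neg_sq]
  calc a * log (a / b) ^ 2 ≤ a * (b / a - 1) ^ 2 := by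
        rw [hswap]
        exact mul_le_mul_of_nonneg_left (sq_log_le_sq_sub_one ((one_le_div ha).2 hab)) ha.le
    _ = (a - b) ^ 2 / a := by field_simp; ring

lemma mul_sq_log_div_le_of_ge {a b : ℝ} (hb : 0 < b) (hba : b ≤ a) :
    a * log (a / b) ^ 2 ≤ (a - b) ^ 2 / b + (a - b) ^ 3 / b ^ 2 := by
  calc a * log (a / b) ^ 2 ≤ a * (a / b - 1) ^ 2 :=
        mul_le_mul_of_nonneg_left (sq_log_le_sq_sub_one ((one_le_div hb).2 hba)) (hb.le.trans hba)
    _ = (a - b) ^ 2 / b + (a - b) ^ 3 / b ^ 2 := by field_simp; ring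

lemma mul_sq_log_div_le {κ a b : ℝ} (hκ : 0 < κ) (ha : κ ≤ a) (hb : κ ≤ b) :
    a * log (a / b) ^ 2 ≤ (a - b) ^ 2 / κ + |a - b| ^ 3 / κ ^ 2 := by
  rcases le_total a b with hab | hba
  · calc a * log (a / b) ^ 2 ≤ (a - b) ^ 2 / a := mul_sq_log_div_le_of_le (hκ.trans_le ha) hab
      _ ≤ (a - b) ^ 2 / κ := by gcongr
      _ ≤ (a - b) ^ 2 / κ + |a - b| ^ 3 / κ ^ 2 := le_add_of_nonneg_right (by positivity)
  · have hsub : 0 ≤ a - b := sub_nonneg.2 hba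
    calc a * log (a / b) ^ 2 ≤ (a - b) ^ 2 / b + (a - b) ^ 3 / b ^ 2 :=
          mul_sq_log_div_le_of_ge (hκ.trans_le hb) hba
      _ ≤ (a - b) ^ 2 / κ + |a - b| ^ 3 / κ ^ 2 := by rw [abs_of_nonneg hsub]; gcongr

lemma mul_sq_log_div_le_of_abs_sub_le {κ a b M : ℝ} (hκ : 0 < κ) (ha : κ ≤ a) (hb : κ ≤ b)
    (hM : |a - b| ≤ M) :
    a * log (a / b) ^ 2 ≤ 1 / κ * M ^ 2 + 1 / κ ^ 2 * M ^ 3 := by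
  calc a * log (a / b) ^ 2 ≤ |a - b| ^ 2 / κ + |a - b| ^ 3 / κ ^ 2 := by
        rw [sq_abs]; exact mul_sq_log_div_le hκ ha hb
    _ ≤ M ^ 2 / κ + M ^ 3 / κ ^ 2 := by gcongr
    _ = 1 / κ * M ^ 2 + 1 / κ ^ 2 * M ^ 3 := by ring

lemma integral_le_of_nonneg_of_le {X : Type*} [MeasurableSpace X] {μ : Measure X}
    [IsProbabilityMeasure μ] {f : X → ℝ} {c : ℝ} (hf : ∀ x, 0 ≤ f x) (hfc : ∀ x, f x ≤ c) :
    ∫ x, f x ∂μ ≤ c := by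
  calc ∫ x, f x ∂μ ≤ ∫ _, c ∂μ :=
        integral_mono_of_nonneg (ae_of_all _ hf) (integrable_const c) (ae_of_all _ hfc)
    _ = c := by simp

theorem second_log_moment_bound_general {X : Type*} [MeasurableSpace X] (μ : Measure X)
    [IsProbabilityMeasure μ] (κ : ℝ) (hκ : 0 < κ) (l1 l2 : X → ℝ)
    (hl1 : ∀ x, κ ≤ l1 x) (hl2 : ∀ x, κ ≤ l2 x)
    (C : ℝ) (hC1 : ∀ x, |l1 x| ≤ C) (hC2 : ∀ x, |l2 x| ≤ C) :
    ∫ x, l1 x * (Real.log (l1 x / l2 x)) ^ 2 ∂μ ≤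
      (1 / κ) * (⨆ x, |l1 x - l2 x|) ^ 2 +
      (1 / κ ^ 2) * (⨆ x, |l1 x - l2 x|) ^ 3 := by
  have hbdd : BddAbove (Set.range fun x => |l1 x - l2 x|) := by
    refine ⟨2 * C, ?_⟩
    rintro _ ⟨x, rfl⟩
    linarith [abs_sub (l1 x) (l2 x), hC1 x, hC2 x]
  refine integral_le_of_nonneg_of_le (fun x => ?_) (fun x => ?_)
  · exact mul_nonneg (hκ.le.trans (hl1 x)) (sq_nonneg _)
  · exact mul_sq_log_div_le_of_abs_sub_le hκ (hl1 x) (hl2 x) (le_ciSup hbdd x)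

theorem second_log_moment_bound {X : Type*} [MeasurableSpace X] (μ : Measure X)
    [IsProbabilityMeasure μ] (κ : ℝ) (hκ : 0 < κ) (l1 l2 : X → ℝ)
    (hm1 : Measurable l1) (hm2 : Measurable l2)
    (hl1 : ∀ x, κ ≤ l1 x) (hl2 : ∀ x, κ ≤ l2 x)
    (C : ℝ) (hC1 : ∀ x, |l1 x| ≤ C) (hC2 : ∀ x, |l2 x| ≤ C)
    (hint : Integrable (fun x => l1 x * (Real.log (l1 x / l2 x)) ^ 2) μ) :
    ∫ x, l1 x * (Real.log (l1 x / l2 x)) ^ 2 ∂μ ≤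
      (1 / κ) * (⨆ x, |l1 x - l2 x|) ^ 2 +
      (1 / κ ^ 2) * (⨆ x, |l1 x - l2 x|) ^ 3 :=
  second_log_moment_bound_general μ κ hκ l1 l2 hl1 hl2 C hC1 hC2
end
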